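/- In the inhomogeneous Hamilton algebra IHa(N), the elements J_ij' := J_ij T² + (G_i Q_j − G_j Q_i) T + (F_i P_j − F_j P_i) T + (P_i Q_j − P_j Q_i) R satisfy [J_ij', J_kl] = δ_il J_jk' + δ_jk J_il' − δ_jl J_ik' − δ_ik J_jl' for all indices, i.e. they transform under so(N) like the generators J_ij. -/

import Mathlib

/-! Bracketing with `ι J_lm` is a derivation of the enveloping algebra. It kills `T` and `R`,
moves `G, F, Q, P` as `so(N)`-vectors, and `J_ij` as the generators; the antisymmetrised
product `v_i w_j - v_j w_i` of two vectors again transforms like `J_ij`. Each summand of `J'_ij`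
is such an object times a power of `T` or `R`, and the transformation law is additive. -/

open UniversalEnvelopingAlgebra

def kdelta (k : Type*) [Field k] {N : ℕ} (a b : Fin N) : k := if a = b then 1 else 0

theorem kdelta_comm {k : Type*} [Field k] {N : ℕ} (a b : Fin N) :
    kdelta k a b = kdelta k b a := by
  simp only [kdelta, eq_comm]

/- The commutator bracket `Ring.instBracket` is not the bracket of a global `LieRing` instance,
so `add_lie`, `sub_lie` and the Leibniz rule have to be restated for it. -/
theorem Ring.add_lie {A : Type*} [Ring A] (a b c : A) : ⁅a + b, c⁆ = ⁅a, c⁆ + ⁅b, c⁆ := by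
  simp only [Ring.lie_def]; noncomm_ring

theorem Ring.sub_lie {A : Type*} [Ring A] (a b c : A) : ⁅a - b, c⁆ = ⁅a, c⁆ - ⁅b, c⁆ := by
  simp only [Ring.lie_def]; noncomm_ring

theorem Ring.mul_lie {A : Type*} [Ring A] (a b c : A) : ⁅a * b, c⁆ = a * ⁅b, c⁆ + ⁅a, c⁆ * b := by
  simp only [Ring.lie_def]; noncomm_ring

section Transforms

variable (k : Type*) [Field k] {A : Type*} [AddCommGroup A] [Module k A] [Bracket A A] {N : ℕ}

/- `x` stands for the generator `J_lm`; the two predicates are the laws by which a vector and the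
family `J_ij` transform under bracketing with it. -/
def TransformsAsVector (x : A) (l m : Fin N) (v : Fin N → A) : Prop :=
  ∀ a, ⁅v a, x⁆ = kdelta k l a • v m - kdelta k m a • v l

def TransformsAsRotation (x : A) (l m : Fin N) (t : Fin N → Fin N → A) : Prop :=
  ∀ i j, ⁅t i j, x⁆ =
    kdelta k i m • t j l + kdelta k j l • t i m - kdelta k j m • t i l - kdelta k i l • t j m

end Transforms

section Covariance

variable {k : Type*} [Field k] {N : ℕ} {l m : Fin N}

theorem TransformsAsVector.of_lie_left {L : Type*} [LieRing L] [LieAlgebra k L] {x : L}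
    {v : Fin N → L} (h : ∀ a, ⁅x, v a⁆ = -(kdelta k l a • v m) + kdelta k m a • v l) :
    TransformsAsVector k x l m v := fun a => by
  rw [← lie_skew, h]; abel

section Envelope

variable {L : Type*} [LieRing L] [LieAlgebra k L]

theorem lie_ι_ι (x y : L) :
    ⁅(ι k x : UniversalEnvelopingAlgebra k L), ι k y⁆ = ι k ⁅x, y⁆ :=
  letI := LieRing.ofAssociativeRing (A := UniversalEnvelopingAlgebra k L)
  ((ι k).map_lie x y).symm

theorem TransformsAsVector.ι {x : L} {v : Fin N → L} (h : TransformsAsVector k x l m v) :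
    TransformsAsVector k (ι k x : UniversalEnvelopingAlgebra k L) l m (fun a => ι k (v a)) :=
  fun a => by rw [lie_ι_ι, h, map_sub, map_smul, map_smul]

theorem commute_ι_of_lie_eq_zero {x c : L} (h : ⁅x, c⁆ = 0) :
    Commute (ι k c : UniversalEnvelopingAlgebra k L) (ι k x) :=
  commute_iff_lie_eq.mpr (by rw [lie_ι_ι, ← lie_skew, h, neg_zero, map_zero])

theorem TransformsAsRotation.ι {x : L} {t : Fin N → Fin N → L}
    (h : TransformsAsRotation k x l m t) :
    TransformsAsRotation k (ι k x : UniversalEnvelopingAlgebra k L) l m (fun i j => ι k (t i j)) :=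
  fun i j => by rw [lie_ι_ι, h]; simp only [map_sub, map_add, map_smul]

end Envelope

section Associative

variable {A : Type*} [Ring A] [Algebra k A] {x : A}

theorem TransformsAsRotation.add {s t : Fin N → Fin N → A} (hs : TransformsAsRotation k x l m s)
    (ht : TransformsAsRotation k x l m t) :
    TransformsAsRotation k x l m (fun i j => s i j + t i j) := fun i j => by
  rw [Ring.add_lie, hs, ht]; module

theorem TransformsAsRotation.mul_right {t : Fin N → Fin N → A} {c : A}
    (ht : TransformsAsRotation k x l m t) (hc : Commute c x) :
    TransformsAsRotation k x l m (fun i j => t i j * c) := fun i j => by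
  rw [Ring.mul_lie, hc.lie_eq, mul_zero, zero_add, ht]
  simp only [sub_mul, add_mul, smul_mul_assoc]

theorem TransformsAsVector.wedge {v w : Fin N → A} (hv : TransformsAsVector k x l m v)
    (hw : TransformsAsVector k x l m w) :
    TransformsAsRotation k x l m (fun i j => v i * w j - v j * w i) := fun i j => by
  rw [Ring.sub_lie, Ring.mul_lie, Ring.mul_lie, hv i, hv j, hw i, hw j]
  simp only [mul_sub, sub_mul, smul_mul_assoc, mul_smul_comm, kdelta_comm l, kdelta_comm m]
  module

end Associative

end Covariance

theorem IHa_virtual_copy_transforms_like_soN_general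
    (k : Type*) [Field k] (g : Type*) [LieRing g] [LieAlgebra k g] (N : ℕ)
    (J : Fin N → Fin N → g) (G F Q P : Fin N → g) (R T : g)
    (hJJ : ∀ i j l m, ⁅J i j, J l m⁆ =
      kdelta k i m • J j l + kdelta k j l • J i m - kdelta k j m • J i l - kdelta k i l • J j m)
    (hJG : ∀ i j l, ⁅J i j, G l⁆ = -(kdelta k i l • G j) + kdelta k j l • G i)
    (hJF : ∀ i j l, ⁅J i j, F l⁆ = -(kdelta k i l • F j) + kdelta k j l • F i)
    (hJQ : ∀ i j l, ⁅J i j, Q l⁆ = -(kdelta k i l • Q j) + kdelta k j l • Q i)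
    (hJP : ∀ i j l, ⁅J i j, P l⁆ = -(kdelta k i l • P j) + kdelta k j l • P i)
    (hJR : ∀ i j, ⁅J i j, R⁆ = 0)
    (hJT : ∀ i j, ⁅J i j, T⁆ = 0)
 :
    ∀ i j l m,
      ⁅(fun a b => (ι k (J a b) : UniversalEnvelopingAlgebra k g) * ι k T ^ 2
      + (ι k (G a) * ι k (Q b) - ι k (G b) * ι k (Q a)) * ι k T
      + (ι k (F a) * ι k (P b) - ι k (F b) * ι k (P a)) * ι k T
      + (ι k (P a) * ι k (Q b) - ι k (P b) * ι k (Q a)) * ι k R) i j, ι k (J l m)⁆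
        = kdelta k i m • ((fun a b => (ι k (J a b) : UniversalEnvelopingAlgebra k g) * ι k T ^ 2
      + (ι k (G a) * ι k (Q b) - ι k (G b) * ι k (Q a)) * ι k T
      + (ι k (F a) * ι k (P b) - ι k (F b) * ι k (P a)) * ι k T
      + (ι k (P a) * ι k (Q b) - ι k (P b) * ι k (Q a)) * ι k R) j l)
          + kdelta k j l • ((fun a b => (ι k (J a b) : UniversalEnvelopingAlgebra k g) * ι k T ^ 2
      + (ι k (G a) * ι k (Q b) - ι k (G b) * ι k (Q a)) * ι k T
      + (ι k (F a) * ι k (P b) - ι k (F b) * ι k (P a)) * ι k T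
      + (ι k (P a) * ι k (Q b) - ι k (P b) * ι k (Q a)) * ι k R) i m)
          - kdelta k j m • ((fun a b => (ι k (J a b) : UniversalEnvelopingAlgebra k g) * ι k T ^ 2
      + (ι k (G a) * ι k (Q b) - ι k (G b) * ι k (Q a)) * ι k T
      + (ι k (F a) * ι k (P b) - ι k (F b) * ι k (P a)) * ι k T
      + (ι k (P a) * ι k (Q b) - ι k (P b) * ι k (Q a)) * ι k R) i l)
          - kdelta k i l • ((fun a b => (ι k (J a b) : UniversalEnvelopingAlgebra k g) * ι k T ^ 2
      + (ι k (G a) * ι k (Q b) - ι k (G b) * ι k (Q a)) * ι k T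
      + (ι k (F a) * ι k (P b) - ι k (F b) * ι k (P a)) * ι k T
      + (ι k (P a) * ι k (Q b) - ι k (P b) * ι k (Q a)) * ι k R) j m) := by
  intro i j l m
  have vector (V : Fin N → g)
      (hV : ∀ i j a, ⁅J i j, V a⁆ = -(kdelta k i a • V j) + kdelta k j a • V i) :
      TransformsAsVector k (ι k (J l m) : UniversalEnvelopingAlgebra k g) l m
        (fun a => ι k (V a)) :=
    (TransformsAsVector.of_lie_left (hV l m)).ι
  have hT := commute_ι_of_lie_eq_zero (k := k) (hJT l m)
  have hR := commute_ι_of_lie_eq_zero (k := k) (hJR l m)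
  have hJ := TransformsAsRotation.ι (k := k) (fun a b => hJJ a b l m)
  exact ((((hJ.mul_right (hT.pow_left 2)).add
    (((vector G hJG).wedge (vector Q hJQ)).mul_right hT)).add
    (((vector F hJF).wedge (vector P hJP)).mul_right hT)).add
    (((vector P hJP).wedge (vector Q hJQ)).mul_right hR)) i j

/-- In `IHa(N)`, the elements
`J'_ij = J_ij T² + (G_i Q_j − G_j Q_i)T + (F_i P_j − F_j P_i)T + (P_i Q_j − P_j Q_i)R`
transform under `so(N)` like the generators `J_ij`:
`⁅J'_ij, ι(J_kl)⁆ = δ_il J'_jk + δ_jk J'_il − δ_jl J'_ik − δ_ik J'_jl`. -/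
theorem IHa_virtual_copy_transforms_like_soN
    (k : Type*) [Field k] (g : Type*) [LieRing g] [LieAlgebra k g] (N : ℕ)
    (J : Fin N → Fin N → g) (G F Q P : Fin N → g) (R E T : g)
    (hJa : ∀ i j, J i j = -J j i)
    (hJJ : ∀ i j l m, ⁅J i j, J l m⁆ =
      kdelta k i m • J j l + kdelta k j l • J i m - kdelta k j m • J i l - kdelta k i l • J j m)
    (hJG : ∀ i j l, ⁅J i j, G l⁆ = -(kdelta k i l • G j) + kdelta k j l • G i)
    (hJF : ∀ i j l, ⁅J i j, F l⁆ = -(kdelta k i l • F j) + kdelta k j l • F i)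
    (hJQ : ∀ i j l, ⁅J i j, Q l⁆ = -(kdelta k i l • Q j) + kdelta k j l • Q i)
    (hJP : ∀ i j l, ⁅J i j, P l⁆ = -(kdelta k i l • P j) + kdelta k j l • P i)
    (hGF : ∀ i j, ⁅G i, F j⁆ = kdelta k i j • R)
    (hGQ : ∀ i j, ⁅G i, Q j⁆ = kdelta k i j • T)
    (hFP : ∀ i j, ⁅F i, P j⁆ = kdelta k i j • T)
    (hEG : ∀ i, ⁅E, G i⁆ = -P i) (hEF : ∀ i, ⁅E, F i⁆ = Q i)
    (hER : ⁅E, R⁆ = (2 : k) • T)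
    (hGG : ∀ i j, ⁅G i, G j⁆ = 0) (hFF : ∀ i j, ⁅F i, F j⁆ = 0)
    (hQQ : ∀ i j, ⁅Q i, Q j⁆ = 0) (hPP : ∀ i j, ⁅P i, P j⁆ = 0)
    (hGP : ∀ i j, ⁅G i, P j⁆ = 0) (hFQ : ∀ i j, ⁅F i, Q j⁆ = 0)
    (hQP : ∀ i j, ⁅Q i, P j⁆ = 0)
    (hJR : ∀ i j, ⁅J i j, R⁆ = 0) (hJE : ∀ i j, ⁅J i j, E⁆ = 0)
    (hJT : ∀ i j, ⁅J i j, T⁆ = 0)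
    (hGR : ∀ i, ⁅G i, R⁆ = 0) (hFR : ∀ i, ⁅F i, R⁆ = 0)
    (hQR : ∀ i, ⁅Q i, R⁆ = 0) (hPR : ∀ i, ⁅P i, R⁆ = 0)
    (hGT : ∀ i, ⁅G i, T⁆ = 0) (hFT : ∀ i, ⁅F i, T⁆ = 0)
    (hQT : ∀ i, ⁅Q i, T⁆ = 0) (hPT : ∀ i, ⁅P i, T⁆ = 0)
    (hRT : ⁅R, T⁆ = 0) (hET : ⁅E, T⁆ = 0)
    (hEQ : ∀ i, ⁅E, Q i⁆ = 0) (hEP : ∀ i, ⁅E, P i⁆ = 0)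
 :
    ∀ i j l m,
      ⁅(fun a b => (ι k (J a b) : UniversalEnvelopingAlgebra k g) * ι k T ^ 2
      + (ι k (G a) * ι k (Q b) - ι k (G b) * ι k (Q a)) * ι k T
      + (ι k (F a) * ι k (P b) - ι k (F b) * ι k (P a)) * ι k T
      + (ι k (P a) * ι k (Q b) - ι k (P b) * ι k (Q a)) * ι k R) i j, ι k (J l m)⁆
        = kdelta k i m • ((fun a b => (ι k (J a b) : UniversalEnvelopingAlgebra k g) * ι k T ^ 2
      + (ι k (G a) * ι k (Q b) - ι k (G b) * ι k (Q a)) * ι k T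
      + (ι k (F a) * ι k (P b) - ι k (F b) * ι k (P a)) * ι k T
      + (ι k (P a) * ι k (Q b) - ι k (P b) * ι k (Q a)) * ι k R) j l)
          + kdelta k j l • ((fun a b => (ι k (J a b) : UniversalEnvelopingAlgebra k g) * ι k T ^ 2
      + (ι k (G a) * ι k (Q b) - ι k (G b) * ι k (Q a)) * ι k T
      + (ι k (F a) * ι k (P b) - ι k (F b) * ι k (P a)) * ι k T
      + (ι k (P a) * ι k (Q b) - ι k (P b) * ι k (Q a)) * ι k R) i m)
          - kdelta k j m • ((fun a b => (ι k (J a b) : UniversalEnvelopingAlgebra k g) * ι k T ^ 2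
      + (ι k (G a) * ι k (Q b) - ι k (G b) * ι k (Q a)) * ι k T
      + (ι k (F a) * ι k (P b) - ι k (F b) * ι k (P a)) * ι k T
      + (ι k (P a) * ι k (Q b) - ι k (P b) * ι k (Q a)) * ι k R) i l)
          - kdelta k i l • ((fun a b => (ι k (J a b) : UniversalEnvelopingAlgebra k g) * ι k T ^ 2
      + (ι k (G a) * ι k (Q b) - ι k (G b) * ι k (Q a)) * ι k T
      + (ι k (F a) * ι k (P b) - ι k (F b) * ι k (P a)) * ι k T
      + (ι k (P a) * ι k (Q b) - ι k (P b) * ι k (Q a)) * ι k R) j m) :=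
  IHa_virtual_copy_transforms_like_soN_general k g N J G F Q P R T hJJ hJG hJF hJQ hJP hJR hJT
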